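/- Let N be a positive integer and let φ_0,…,φ_{N+1} : ℂ → ℂ be polynomial functions, with φ*_{N+1} the reciprocal polynomial of φ_{N+1} of degree bound N+1 (the coefficient of z^j in φ*_{N+1} is the complex conjugate of the coefficient of z^{N+1−j} in φ_{N+1}), such that the Christoffel–Darboux formula on the unit circle holds: for all z, w ∈ ℂ with conj(w)·z ≠ 1, Σ_{j=0}^N φ_j(z)·conj(φ_j(w)) = (conj(φ*_{N+1}(w))·φ*_{N+1}(z) − conj(φ_{N+1}(w))·φ_{N+1}(z))/(1 − conj(w)·z). Let z ∈ ℂ with |z| ≠ 1 and Σ_{j=0}^N |φ_j(z)|² > 0, and write A = |φ*_{N+1}(z)|² − |φ_{N+1}(z)|². Then for K = (K₁,K₂) ∈ ℝ², the density function built from f_j = φ_j satisfies h_{N,K}(z) = (1/π)·exp(−((K₁²+K₂²)/2)·(1 − |z|²)/A) · [ 1/(1 − |z|²)² − |φ*_{N+1}(z)·φ_{N+1}′(z) − φ*_{N+1}′(z)·φ_{N+1}(z)|²/A² + ((K₁²+K₂²)/2)·( (1 − |z|²)·|conj(φ*_{N+1}′(z))·φ*_{N+1}(z) − conj(φ_{N+1}′(z))·φ_{N+1}(z)|²/A³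 + 2·Re(z·(φ*_{N+1}′(z)·conj(φ*_{N+1}(z)) − φ_{N+1}′(z)·conj(φ_{N+1}(z))))/A² + |z|²/((1 − |z|²)·A) ) ]. -/

import Mathlib

open Finset

/-- The kernel `B₀,N(z) = ∑ |f_j(z)|²`. -/
noncomputable def B0 (f : ℕ → ℂ → ℂ) (N : ℕ) (z : ℂ) : ℝ :=
  ∑ j ∈ Finset.range (N + 1), ‖f j z‖ ^ 2

/-- The kernel `B₁,N(z) = ∑ conj(f_j(z))·f_j′(z)`. -/
noncomputable def B1 (f : ℕ → ℂ → ℂ) (N : ℕ) (z : ℂ) : ℂ :=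
  ∑ j ∈ Finset.range (N + 1), (starRingEnd ℂ) (f j z) * deriv (f j) z

/-- The kernel `B₂,N(z) = ∑ |f_j′(z)|²`. -/
noncomputable def B2 (f : ℕ → ℂ → ℂ) (N : ℕ) (z : ℂ) : ℝ :=
  ∑ j ∈ Finset.range (N + 1), ‖deriv (f j) z‖ ^ 2

/-- The density `h_{N,K}(z)` of complex zeros of `∑ η_j f_j(z) = K₁ + i K₂`. -/
noncomputable def hDen (f : ℕ → ℂ → ℂ) (N : ℕ) (K₁ K₂ : ℝ) (z : ℂ) : ℝ :=
  Real.exp (-(K₁ ^ 2 + K₂ ^ 2) / (2 * B0 f N z)) / (Real.pi * B0 f N z) *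
    (B2 f N z - ‖B1 f N z‖ ^ 2 / B0 f N z *
      (1 - (K₁ ^ 2 + K₂ ^ 2) / (2 * B0 f N z)))

/-! The kernels are the diagonal values of `K(ζ, w) = ∑ φ_j(ζ) conj (φ_j(w))` and of its derivatives
`∂_ζ K` and `∂_ζ ∂_{conj w} K`. Off the unit circle the Christoffel–Darboux formula expresses `K`
near the diagonal through `φ*_{N+1}` and `φ_{N+1}` alone, so the three kernels are explicit
rational expressions in `φ*_{N+1}(z)`, `φ_{N+1}(z)`, their derivatives and `1 - |z|²`.
Substituting them into `h_{N,K}` and using the identity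
`(|a|² - |b|²)(|a'|² - |b'|²) = |conj a' a - conj b' b|² - |a b' - a' b|²` gives the formula. -/

open ComplexConjugate Filter Topology

theorem sq_norm_ne_one {z : ℂ} (hz : ‖z‖ ≠ 1) : ‖z‖ ^ 2 ≠ 1 :=
  fun h => hz ((pow_eq_one_iff_of_nonneg (norm_nonneg z) two_ne_zero).1 h)

theorem conj_mul_self_ne_one {z : ℂ} (hz : ‖z‖ ≠ 1) : conj z * z ≠ 1 := by
  rw [Complex.conj_mul']
  exact_mod_cast sq_norm_ne_one hz

theorem indefinite_lagrange_identity (a b a' b' : ℂ) :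
    (‖a‖ ^ 2 - ‖b‖ ^ 2) * (‖a'‖ ^ 2 - ‖b'‖ ^ 2) =
      ‖conj a' * a - conj b' * b‖ ^ 2 - ‖a * b' - a' * b‖ ^ 2 := by
  apply Complex.ofReal_injective
  push_cast
  simp only [← Complex.conj_mul', map_sub, map_mul, Complex.conj_conj]
  ring

theorem sq_norm_mul_ofReal_add_conj_mul_ofReal (c z : ℂ) (d A : ℝ) :
    ‖c * d + conj z * A‖ ^ 2 = ‖c‖ ^ 2 * d ^ 2 + 2 * A * (z * c).re * d + ‖z‖ ^ 2 * A ^ 2 := by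
  apply Complex.ofReal_injective
  push_cast
  simp only [← Complex.conj_mul', Complex.re_eq_add_conj, map_add, map_mul, Complex.conj_conj,
    Complex.conj_ofReal]
  ring

theorem eventually_mul_ne_one {c z : ℂ} (h : c * z ≠ 1) : ∀ᶠ ζ in 𝓝 z, c * ζ ≠ 1 :=
  (continuous_const_mul c).continuousAt.eventually_ne h

def ChristoffelDarboux (φ : ℕ → ℂ → ℂ) (N : ℕ) (P Ps : ℂ → ℂ) : Prop :=
  ∀ z w : ℂ, conj w * z ≠ 1 →
    ∑ j ∈ range (N + 1), φ j z * conj (φ j w) =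
      (conj (Ps w) * Ps z - conj (P w) * P z) / (1 - conj w * z)

namespace ChristoffelDarboux

variable {φ : ℕ → ℂ → ℂ} {N : ℕ} {P Ps : ℂ → ℂ} {z : ℂ}

theorem B0_eq (h : ChristoffelDarboux φ N P Ps) (hz : ‖z‖ ≠ 1) :
    B0 φ N z = (‖Ps z‖ ^ 2 - ‖P z‖ ^ 2) / (1 - ‖z‖ ^ 2) := by
  apply Complex.ofReal_injective
  rw [B0]
  push_cast
  simp only [← Complex.mul_conj']
  rw [h z z (conj_mul_self_ne_one hz), mul_comm z, mul_comm (Ps z), mul_comm (P z)]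

theorem sum_deriv_mul_conj (h : ChristoffelDarboux φ N P Ps)
    (hφ : ∀ j ≤ N, DifferentiableAt ℂ (φ j) z) (hP : DifferentiableAt ℂ P z)
    (hPs : DifferentiableAt ℂ Ps z) {w : ℂ} (hw : conj w * z ≠ 1) :
    ∑ j ∈ range (N + 1), deriv (φ j) z * conj (φ j w) =
      ((conj (Ps w) * deriv Ps z - conj (P w) * deriv P z) * (1 - conj w * z) +
        conj w * (conj (Ps w) * Ps z - conj (P w) * P z)) / (1 - conj w * z) ^ 2 := by
  have hsum : HasDerivAt (fun ζ => ∑ j ∈ range (N + 1), φ j ζ * conj (φ j w))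
      (∑ j ∈ range (N + 1), deriv (φ j) z * conj (φ j w)) z :=
    HasDerivAt.fun_sum fun j hj =>
      (hφ j (Nat.lt_succ_iff.mp (mem_range.mp hj))).hasDerivAt.mul_const _
  have hquot := ((hPs.hasDerivAt.const_mul (conj (Ps w))).sub
    (hP.hasDerivAt.const_mul (conj (P w)))).div
    (((hasDerivAt_id z).const_mul (conj w)).const_sub 1) (sub_ne_zero.2 hw.symm)
  have hev : (fun ζ => ∑ j ∈ range (N + 1), φ j ζ * conj (φ j w)) =ᶠ[𝓝 z]
      fun ζ => (conj (Ps w) * Ps ζ - conj (P w) * P ζ) / (1 - conj w * ζ) :=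
    (eventually_mul_ne_one hw).mono fun ζ hζ => h ζ w hζ
  rw [hsum.unique (hquot.congr_of_eventuallyEq hev)]
  simp only [id, Pi.sub_apply]
  ring

theorem B1_eq (h : ChristoffelDarboux φ N P Ps) (hz : ‖z‖ ≠ 1)
    (hφ : ∀ j ≤ N, DifferentiableAt ℂ (φ j) z) (hP : DifferentiableAt ℂ P z)
    (hPs : DifferentiableAt ℂ Ps z) :
    B1 φ N z =
      ((deriv Ps z * conj (Ps z) - deriv P z * conj (P z)) * (1 - ‖z‖ ^ 2 : ℝ) +
        conj z * (‖Ps z‖ ^ 2 - ‖P z‖ ^ 2 : ℝ)) / ((1 - ‖z‖ ^ 2 : ℝ) : ℂ) ^ 2 := by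
  have h1 := h.sum_deriv_mul_conj hφ hP hPs (conj_mul_self_ne_one hz)
  simp only [Complex.conj_mul'] at h1
  rw [B1, sum_congr rfl fun j _ => mul_comm _ _, h1]
  push_cast
  ring

theorem sq_norm_B1_eq (h : ChristoffelDarboux φ N P Ps) (hz : ‖z‖ ≠ 1)
    (hφ : ∀ j ≤ N, DifferentiableAt ℂ (φ j) z) (hP : DifferentiableAt ℂ P z)
    (hPs : DifferentiableAt ℂ Ps z) :
    ‖B1 φ N z‖ ^ 2 =
      (‖conj (deriv Ps z) * Ps z - conj (deriv P z) * P z‖ ^ 2 * (1 - ‖z‖ ^ 2) ^ 2 +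
        2 * (‖Ps z‖ ^ 2 - ‖P z‖ ^ 2) *
          (z * (deriv Ps z * conj (Ps z) - deriv P z * conj (P z))).re * (1 - ‖z‖ ^ 2) +
        ‖z‖ ^ 2 * (‖Ps z‖ ^ 2 - ‖P z‖ ^ 2) ^ 2) / (1 - ‖z‖ ^ 2) ^ 4 := by
  have hconj : conj (deriv Ps z) * Ps z - conj (deriv P z) * P z =
      conj (deriv Ps z * conj (Ps z) - deriv P z * conj (P z)) := by
    simp only [map_sub, map_mul, Complex.conj_conj]
  rw [h.B1_eq hz hφ hP hPs, norm_div, div_pow, sq_norm_mul_ofReal_add_conj_mul_ofReal, hconj,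
    Complex.norm_conj, norm_pow, Complex.norm_real, Real.norm_eq_abs, sq_abs, ← pow_mul]

theorem B2_eq (h : ChristoffelDarboux φ N P Ps) (hz : ‖z‖ ≠ 1)
    (hφ : ∀ j ≤ N, DifferentiableAt ℂ (φ j) z) (hP : DifferentiableAt ℂ P z)
    (hPs : DifferentiableAt ℂ Ps z) :
    B2 φ N z =
      ((‖deriv Ps z‖ ^ 2 - ‖deriv P z‖ ^ 2) * (1 - ‖z‖ ^ 2) ^ 2 +
        2 * (z * (deriv Ps z * conj (Ps z) - deriv P z * conj (P z))).re * (1 - ‖z‖ ^ 2) +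
        (‖Ps z‖ ^ 2 - ‖P z‖ ^ 2) * (1 + ‖z‖ ^ 2)) / (1 - ‖z‖ ^ 2) ^ 3 := by
  have hzz := conj_mul_self_ne_one hz
  have hd : 1 - z * conj z ≠ 0 := by rw [mul_comm]; exact sub_ne_zero.2 hzz.symm
  have hsum : HasDerivAt (fun w => ∑ j ∈ range (N + 1), conj (deriv (φ j) z) * φ j w)
      (∑ j ∈ range (N + 1), conj (deriv (φ j) z) * deriv (φ j) z) z :=
    HasDerivAt.fun_sum fun j hj =>
      (hφ j (Nat.lt_succ_iff.mp (mem_range.mp hj))).hasDerivAt.const_mul _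
  have hl : HasDerivAt (fun w => 1 - w * conj z) (-conj z) z := by
    simpa using ((hasDerivAt_id z).mul_const (conj z)).const_sub 1
  have hquot := ((((hPs.hasDerivAt.mul_const (conj (deriv Ps z))).fun_sub
    (hP.hasDerivAt.mul_const (conj (deriv P z)))).fun_mul hl).fun_add
    ((hasDerivAt_id z).fun_mul ((hPs.hasDerivAt.mul_const (conj (Ps z))).fun_sub
      (hP.hasDerivAt.mul_const (conj (P z)))))).fun_div (hl.fun_pow 2)
    (pow_ne_zero 2 hd)
  -- The conjugate of `sum_deriv_mul_conj` is holomorphic in `w`; its derivative at `z` is `B2`.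
  have hev : (fun w => ∑ j ∈ range (N + 1), conj (deriv (φ j) z) * φ j w) =ᶠ[𝓝 z]
      fun w => ((Ps w * conj (deriv Ps z) - P w * conj (deriv P z)) * (1 - w * conj z) +
        id w * (Ps w * conj (Ps z) - P w * conj (P z))) / (1 - w * conj z) ^ 2 := by
    have hnear : ∀ᶠ w in 𝓝 z, conj w * z ≠ 1 :=
      (Complex.continuous_conj.mul continuous_const).continuousAt.eventually_ne hzz
    refine hnear.mono fun w hw => ?_
    have hconj := congrArg conj (h.sum_deriv_mul_conj hφ hP hPs hw)
    simp only [map_sum, map_mul, map_div₀, map_sub, map_add, map_pow, map_one,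
      Complex.conj_conj] at hconj
    exact hconj
  have hB2 : (B2 φ N z : ℂ) = ∑ j ∈ range (N + 1), conj (deriv (φ j) z) * deriv (φ j) z := by
    simp only [B2, Complex.ofReal_sum, Complex.ofReal_pow, Complex.conj_mul']
  apply Complex.ofReal_injective
  rw [hB2, hsum.unique (hquot.congr_of_eventuallyEq hev)]
  push_cast
  simp only [← Complex.conj_mul', Complex.re_eq_add_conj, map_sub, map_mul, Complex.conj_conj, id]
  field_simp
  ring

end ChristoffelDarboux

theorem hDen_eq_of_kernels {f : ℕ → ℂ → ℂ} {N : ℕ} {z : ℂ} {A E ρ n₁ n₃ r : ℝ}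
    (hA : A ≠ 0) (hr : 1 - r ≠ 0) (h0 : B0 f N z = A / (1 - r))
    (h1 : ‖B1 f N z‖ ^ 2 = (n₁ * (1 - r) ^ 2 + 2 * A * ρ * (1 - r) + r * A ^ 2) / (1 - r) ^ 4)
    (h2 : B2 f N z = (E * (1 - r) ^ 2 + 2 * ρ * (1 - r) + A * (1 + r)) / (1 - r) ^ 3)
    (hE : A * E = n₁ - n₃) (K₁ K₂ : ℝ) :
    hDen f N K₁ K₂ z = 1 / Real.pi * Real.exp (-((K₁ ^ 2 + K₂ ^ 2) / 2) * (1 - r) / A) *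
      (1 / (1 - r) ^ 2 - n₃ / A ^ 2 + (K₁ ^ 2 + K₂ ^ 2) / 2 *
        ((1 - r) * n₁ / A ^ 3 + 2 * ρ / A ^ 2 + r / ((1 - r) * A))) := by
  have hexp :
      -(K₁ ^ 2 + K₂ ^ 2) / (2 * (A / (1 - r))) = -((K₁ ^ 2 + K₂ ^ 2) / 2) * (1 - r) / A := by
    field_simp
  have hn₃ : n₃ = n₁ - A * E := by linarith
  rw [hDen, h0, h1, h2, hexp, hn₃]
  field_simp
  ring

theorem density_orthogonal_unit_circle_general (N : ℕ)
    (φ : ℕ → ℂ → ℂ) (φs : ℂ → ℂ) (Q : Polynomial ℂ)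
    (hpoly : ∀ j ≤ N + 1, ∃ q : Polynomial ℂ, ∀ z : ℂ, φ j z = Polynomial.eval z q)
    (hφs : ∀ z : ℂ, φs z =
      Polynomial.eval z (Polynomial.reflect (N + 1) (Q.map (starRingEnd ℂ))))
    (hCD : ∀ z w : ℂ, (starRingEnd ℂ) w * z ≠ 1 →
      ∑ j ∈ Finset.range (N + 1), φ j z * (starRingEnd ℂ) (φ j w) =
        ((starRingEnd ℂ) (φs w) * φs z -
          (starRingEnd ℂ) (φ (N + 1) w) * φ (N + 1) z) /
          (1 - (starRingEnd ℂ) w * z))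
    (z : ℂ) (hz : ‖z‖ ≠ 1)
    (hB0 : 0 < B0 φ N z)
    (A : ℝ) (hA : A = ‖φs z‖ ^ 2 - ‖φ (N + 1) z‖ ^ 2)
    (K₁ K₂ : ℝ) :
    hDen φ N K₁ K₂ z =
      1 / Real.pi *
        Real.exp (-((K₁ ^ 2 + K₂ ^ 2) / 2) * (1 - ‖z‖ ^ 2) / A) *
        (1 / (1 - ‖z‖ ^ 2) ^ 2 -
          ‖φs z * deriv (φ (N + 1)) z - deriv φs z * φ (N + 1) z‖ ^ 2 /
            A ^ 2 +
          (K₁ ^ 2 + K₂ ^ 2) / 2 *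
            ((1 - ‖z‖ ^ 2) *
                ‖(starRingEnd ℂ) (deriv φs z) * φs z -
                  (starRingEnd ℂ) (deriv (φ (N + 1)) z) * φ (N + 1) z‖ ^ 2 /
                A ^ 3 +
              2 * (z * (deriv φs z * (starRingEnd ℂ) (φs z) -
                    deriv (φ (N + 1)) z * (starRingEnd ℂ) (φ (N + 1) z))).re /
                A ^ 2 +
              ‖z‖ ^ 2 / ((1 - ‖z‖ ^ 2) * A))) := by
  have hCD : ChristoffelDarboux φ N (φ (N + 1)) φs := hCD
  have hφ : ∀ j ≤ N + 1, DifferentiableAt ℂ (φ j) z := fun j hj => by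
    obtain ⟨q, hq⟩ := hpoly j hj
    rw [funext hq]
    exact q.differentiableAt
  have hφs' : DifferentiableAt ℂ φs z := by
    rw [funext hφs]
    exact Polynomial.differentiableAt _
  have hφ' : ∀ j ≤ N, DifferentiableAt ℂ (φ j) z := fun j hj => hφ j (hj.trans N.le_succ)
  have hB0eq := hCD.B0_eq hz
  rw [← hA] at hB0eq
  have hA0 : A ≠ 0 := by
    rintro rfl
    rw [hB0eq, zero_div] at hB0
    exact lt_irrefl 0 hB0
  subst hA
  exact hDen_eq_of_kernels hA0 (sub_ne_zero.2 (sq_norm_ne_one hz).symm) hB0eq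
    (hCD.sq_norm_B1_eq hz hφ' (hφ _ le_rfl) hφs') (hCD.B2_eq hz hφ' (hφ _ le_rfl) hφs')
    (indefinite_lagrange_identity _ _ _ _) K₁ K₂

/-- Theorem: density of complex zeros of random sums of polynomials
orthonormal on the unit circle, at an arbitrary level `K = (K₁, K₂)`,
where `A = |φ*_{N+1}(z)|² − |φ_{N+1}(z)|²`. -/
theorem density_orthogonal_unit_circle (N : ℕ) (hN : 0 < N)
    (φ : ℕ → ℂ → ℂ) (φs : ℂ → ℂ) (Q : Polynomial ℂ)
    (hpoly : ∀ j ≤ N + 1, ∃ q : Polynomial ℂ, ∀ z : ℂ, φ j z = Polynomial.eval z q)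
    (hQ : ∀ z : ℂ, φ (N + 1) z = Polynomial.eval z Q)
    (hφs : ∀ z : ℂ, φs z =
      Polynomial.eval z (Polynomial.reflect (N + 1) (Q.map (starRingEnd ℂ))))
    (hCD : ∀ z w : ℂ, (starRingEnd ℂ) w * z ≠ 1 →
      ∑ j ∈ Finset.range (N + 1), φ j z * (starRingEnd ℂ) (φ j w) =
        ((starRingEnd ℂ) (φs w) * φs z -
          (starRingEnd ℂ) (φ (N + 1) w) * φ (N + 1) z) /
          (1 - (starRingEnd ℂ) w * z))
    (z : ℂ) (hz : ‖z‖ ≠ 1)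
    (hB0 : 0 < B0 φ N z)
    (A : ℝ) (hA : A = ‖φs z‖ ^ 2 - ‖φ (N + 1) z‖ ^ 2)
    (K₁ K₂ : ℝ) :
    hDen φ N K₁ K₂ z =
      1 / Real.pi *
        Real.exp (-((K₁ ^ 2 + K₂ ^ 2) / 2) * (1 - ‖z‖ ^ 2) / A) *
        (1 / (1 - ‖z‖ ^ 2) ^ 2 -
          ‖φs z * deriv (φ (N + 1)) z - deriv φs z * φ (N + 1) z‖ ^ 2 /
            A ^ 2 +
          (K₁ ^ 2 + K₂ ^ 2) / 2 *
            ((1 - ‖z‖ ^ 2) *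
                ‖(starRingEnd ℂ) (deriv φs z) * φs z -
                  (starRingEnd ℂ) (deriv (φ (N + 1)) z) * φ (N + 1) z‖ ^ 2 /
                A ^ 3 +
              2 * (z * (deriv φs z * (starRingEnd ℂ) (φs z) -
                    deriv (φ (N + 1)) z * (starRingEnd ℂ) (φ (N + 1) z))).re /
                A ^ 2 +
              ‖z‖ ^ 2 / ((1 - ‖z‖ ^ 2) * A))) :=
  density_orthogonal_unit_circle_general N φ φs Q hpoly hφs hCD z hz hB0 A hA K₁ K₂
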